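/- Let V : Ω → [0,∞) be measurable and integrable on bounded subsets of Ω. Let h : ℝ → ℂ be continuously differentiable with h and h′ square integrable over ℝ and with ∫_ℝ V̂(x)·|h(x)|² dx < ∞, where V̂(x) = (2/d)∫₀^d V(x,y)·sin²(πy/(2d)) dy. Set v(x,y) = h(x)·sin(πy/(2d)). Then ∫_Ω ( |∇v(x,y)|² − (π²/(4d²))·|v(x,y)|² ) dx dy − 2∫_Ω V(x,y)·|v(x,y)|² dx dy = (d/2)·( ∫_ℝ |h′(x)|² dx − 2∫_ℝ V̂(x)·|h(x)|² dx ). -/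

import Mathlib

/-! For `v = h ⊗ s` with `s(y) = sin(πy/(2d))`, the transverse energy density
`|h|²(|s'|² − (π/(2d))² s²) = (π/(2d))² |h|² cos(πy/d)` integrates to zero in `y`, while
`∫₀^d s² = d/2`; so by Fubini the shifted energy of `v` is `(d/2)∫|h'|²`. The potential term is
Fubini for a nonnegative integrand: local integrability of `V` on the strip makes almost every
slice `V(x,·)` integrable on `(0,d)`, and its `y`-integral against `|v|²` is
`(d/2) V̂(x)|h(x)|²`. -/

open Real MeasureTheory

/-- The strip `Ω = ℝ × (0,d)`. -/
def Strip (d : ℝ) : Set (ℝ × ℝ) := Set.univ ×ˢ Set.Ioo 0 d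

/-- `V̂(x) = (2/d)∫₀^d V(x,y)·sin²(πy/(2d)) dy`. -/
noncomputable def Vhat (d : ℝ) (V : ℝ × ℝ → ℝ) (x : ℝ) : ℝ :=
  (2 / d) * ∫ y in (0:ℝ)..d, V (x, y) * Real.sin (π * y / (2 * d)) ^ 2

open Set

lemma integral_sin_sq_quarter_period {d : ℝ} (hd : 0 < d) :
    ∫ y in Ioo 0 d, sin (π * y / (2 * d)) ^ 2 = d / 2 := by
  rw [← integral_Ioc_eq_integral_Ioo, ← intervalIntegral.integral_of_le hd.le]
  simp_rw [mul_div_right_comm π _ (2 * d)]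
  rw [intervalIntegral.integral_comp_mul_left (fun x => sin x ^ 2) (by positivity),
    integral_sin_sq, show π / (2 * d) * d = π / 2 by field_simp]
  simp
  field_simp

lemma integral_cos_half_period {d : ℝ} (hd : 0 < d) :
    ∫ y in Ioo 0 d, cos (π * y / d) = 0 := by
  rw [← integral_Ioc_eq_integral_Ioo, ← intervalIntegral.integral_of_le hd.le]
  simp_rw [mul_div_right_comm π _ d]
  rw [intervalIntegral.integral_comp_mul_left cos (by positivity), integral_cos]
  field_simp
  simp

section ProductFunction
variable {𝔸 : Type*} [NormedCommRing 𝔸] [NormedAlgebra ℝ 𝔸] {f g : ℝ → 𝔸} {p : ℝ × ℝ}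

lemma hasFDerivAt_mul_prod (hf : DifferentiableAt ℝ f p.1) (hg : DifferentiableAt ℝ g p.2) :
    HasFDerivAt (fun q : ℝ × ℝ => f q.1 * g q.2)
      (f p.1 • (fderiv ℝ g p.2).comp (.snd ℝ ℝ ℝ) + g p.2 • (fderiv ℝ f p.1).comp (.fst ℝ ℝ ℝ)) p :=
  (hf.hasFDerivAt.comp p hasFDerivAt_fst).mul (hg.hasFDerivAt.comp p hasFDerivAt_snd)

lemma fderiv_mul_prod_apply_one_zero (hf : DifferentiableAt ℝ f p.1)
    (hg : DifferentiableAt ℝ g p.2) :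
    fderiv ℝ (fun q : ℝ × ℝ => f q.1 * g q.2) p (1, 0) = deriv f p.1 * g p.2 := by
  simp [(hasFDerivAt_mul_prod hf hg).fderiv, mul_comm]

lemma fderiv_mul_prod_apply_zero_one (hf : DifferentiableAt ℝ f p.1)
    (hg : DifferentiableAt ℝ g p.2) :
    fderiv ℝ (fun q : ℝ × ℝ => f q.1 * g q.2) p (0, 1) = f p.1 * deriv g p.2 := by
  simp [(hasFDerivAt_mul_prod hf hg).fderiv]

end ProductFunction

lemma hasDerivAt_ofReal_sin_mul (c y : ℝ) :
    HasDerivAt (fun y : ℝ => (sin (c * y) : ℂ)) ((c * cos (c * y) : ℝ) : ℂ) y := by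
  simpa [mul_comm] using ((hasDerivAt_mul_const c).sin).ofReal_comp

lemma shifted_energy_density_eq {d : ℝ} (hd : d ≠ 0) {h : ℝ → ℂ} (hh : Differentiable ℝ h)
    (p : ℝ × ℝ) :
    ‖fderiv ℝ (fun q : ℝ × ℝ => h q.1 * (sin (π * q.2 / (2 * d)) : ℂ)) p (1, 0)‖ ^ 2
      + ‖fderiv ℝ (fun q : ℝ × ℝ => h q.1 * (sin (π * q.2 / (2 * d)) : ℂ)) p (0, 1)‖ ^ 2
      - π ^ 2 / (4 * d ^ 2) * ‖h p.1 * (sin (π * p.2 / (2 * d)) : ℂ)‖ ^ 2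
    = ‖deriv h p.1‖ ^ 2 * sin (π * p.2 / (2 * d)) ^ 2
      + π ^ 2 / (4 * d ^ 2) * ‖h p.1‖ ^ 2 * cos (π * p.2 / d) := by
  have hmode : HasDerivAt (fun y : ℝ => (sin (π * y / (2 * d)) : ℂ))
      ((π / (2 * d) * cos (π * p.2 / (2 * d)) : ℝ) : ℂ) p.2 := by
    simpa only [mul_div_right_comm π] using hasDerivAt_ofReal_sin_mul (π / (2 * d)) p.2
  rw [fderiv_mul_prod_apply_one_zero (hh p.1) hmode.differentiableAt,
    fderiv_mul_prod_apply_zero_one (hh p.1) hmode.differentiableAt, hmode.deriv,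
    show π * p.2 / d = 2 * (π * p.2 / (2 * d)) by field_simp, cos_two_mul']
  simp only [norm_mul, Complex.norm_real, norm_eq_abs, mul_pow, sq_abs]
  field_simp
  ring

lemma volume_restrict_strip (d : ℝ) :
    volume.restrict (Strip d) = volume.prod (volume.restrict (Ioo 0 d)) := by
  rw [Strip, Measure.volume_eq_prod, ← Measure.prod_restrict, Measure.restrict_univ]

lemma ae_integrableOn_slice {d : ℝ} {V : ℝ × ℝ → ℝ}
    (hV : ∀ B : Set (ℝ × ℝ), Bornology.IsBounded B → IntegrableOn V (B ∩ Strip d)) :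
    ∀ᵐ x : ℝ, IntegrableOn (fun y => V (x, y)) (Ioo 0 d) := by
  have hball (n : ℕ) : ∀ᵐ x ∂volume.restrict (Metric.closedBall (0 : ℝ) n),
      IntegrableOn (fun y => V (x, y)) (Ioo 0 d) := by
    have hB := hV _
      ((Metric.isBounded_closedBall (x := (0 : ℝ)) (r := n)).prod (Metric.isBounded_Ioo 0 d))
    rw [Strip, inter_eq_left.mpr (prod_mono (subset_univ _) subset_rfl), IntegrableOn,
      Measure.volume_eq_prod, ← Measure.prod_restrict] at hB
    exact hB.prod_right_ae
  simpa [Metric.iUnion_closedBall_nat] using (ae_restrict_iUnion_iff _ _).mpr hball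

lemma integral_prod_eq_integral_integral_of_nonneg {α β : Type*} [MeasurableSpace α]
    [MeasurableSpace β] {μ : Measure α} {ν : Measure β} [SFinite μ] [SFinite ν]
    {F : α × β → ℝ} (hF : 0 ≤ F) (hFm : AEStronglyMeasurable F (μ.prod ν))
    (hslice : ∀ᵐ x ∂μ, Integrable (fun y => F (x, y)) ν)
    (hint : Integrable (fun x => ∫ y, F (x, y) ∂ν) μ) :
    ∫ p, F p ∂μ.prod ν = ∫ x, ∫ y, F (x, y) ∂ν ∂μ := by
  refine integral_prod F ((integrable_prod_iff hFm).mpr ⟨hslice, ?_⟩)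
  simpa only [norm_of_nonneg (hF _)] using hint

lemma integral_slice_potential {d : ℝ} (hd : 0 < d) (V : ℝ × ℝ → ℝ) (h : ℝ → ℂ) (x : ℝ) :
    ∫ y in Ioo 0 d, V (x, y) * ‖h x * (sin (π * y / (2 * d)) : ℂ)‖ ^ 2
      = d / 2 * (Vhat d V x * ‖h x‖ ^ 2) := by
  simp only [norm_mul, Complex.norm_real, norm_eq_abs, mul_pow, sq_abs]
  rw [Vhat, intervalIntegral.integral_of_le hd.le, integral_Ioc_eq_integral_Ioo,
    ← mul_assoc, ← mul_assoc, show d / 2 * (2 / d) = 1 by field_simp, one_mul,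
    ← integral_mul_const]
  exact integral_congr_ae (ae_of_all _ fun y => by ring)

lemma integral_strip_potential {d : ℝ} (hd : 0 < d) {V : ℝ × ℝ → ℝ} (hVmeas : Measurable V)
    (hVpos : ∀ p, 0 ≤ V p)
    (hVloc : ∀ B : Set (ℝ × ℝ), Bornology.IsBounded B → IntegrableOn V (B ∩ Strip d))
    {h : ℝ → ℂ} (hh : Continuous h) (hVh : Integrable (fun x => Vhat d V x * ‖h x‖ ^ 2)) :
    ∫ p in Strip d, V p * ‖h p.1 * (sin (π * p.2 / (2 * d)) : ℂ)‖ ^ 2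
      = d / 2 * ∫ x, Vhat d V x * ‖h x‖ ^ 2 := by
  have hv : Continuous fun p : ℝ × ℝ => ‖h p.1 * (sin (π * p.2 / (2 * d)) : ℂ)‖ ^ 2 := by
    fun_prop
  have hv_le (x y : ℝ) : ‖‖h x * (sin (π * y / (2 * d)) : ℂ)‖ ^ 2‖ ≤ ‖h x‖ ^ 2 := by
    rw [norm_pow, norm_norm, norm_mul, Complex.norm_real, norm_eq_abs]
    gcongr
    exact mul_le_of_le_one_right (norm_nonneg _) (abs_sin_le_one _)
  rw [volume_restrict_strip, integral_prod_eq_integral_integral_of_nonneg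
    (fun p => mul_nonneg (hVpos p) (by positivity))
    (hVmeas.mul hv.measurable).aestronglyMeasurable]
  · simp_rw [integral_slice_potential hd V h, integral_const_mul]
  · filter_upwards [ae_integrableOn_slice hVloc] with x hx
    exact hx.mul_bdd (hv.comp (Continuous.prodMk_right x)).aestronglyMeasurable
      (ae_of_all _ fun y => hv_le x y)
  · simpa only [integral_slice_potential hd V h] using hVh.const_mul (d / 2)

lemma integral_strip_shifted_energy {d : ℝ} (hd : 0 < d) {h : ℝ → ℂ} (hh : Differentiable ℝ h)
    (hh2 : Integrable (fun x => ‖h x‖ ^ 2)) (hh'2 : Integrable (fun x => ‖deriv h x‖ ^ 2)) :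
    ∫ p in Strip d,
        ((‖fderiv ℝ (fun q : ℝ × ℝ => h q.1 * (sin (π * q.2 / (2 * d)) : ℂ)) p (1, 0)‖ ^ 2
          + ‖fderiv ℝ (fun q : ℝ × ℝ => h q.1 * (sin (π * q.2 / (2 * d)) : ℂ)) p (0, 1)‖ ^ 2)
          - π ^ 2 / (4 * d ^ 2) * ‖h p.1 * (sin (π * p.2 / (2 * d)) : ℂ)‖ ^ 2)
      = d / 2 * ∫ x, ‖deriv h x‖ ^ 2 := by
  have hsin : IntegrableOn (fun y => sin (π * y / (2 * d)) ^ 2) (Ioo 0 d) :=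
    (Continuous.integrableOn_Icc (by fun_prop)).mono_set Ioo_subset_Icc_self
  have hcos : IntegrableOn (fun y => cos (π * y / d)) (Ioo 0 d) :=
    (Continuous.integrableOn_Icc (by fun_prop)).mono_set Ioo_subset_Icc_self
  simp_rw [shifted_energy_density_eq hd.ne' hh]
  rw [volume_restrict_strip, integral_add (hh'2.mul_prod hsin) ((hh2.const_mul _).mul_prod hcos),
    integral_prod_mul (fun x => ‖deriv h x‖ ^ 2) (fun y => sin (π * y / (2 * d)) ^ 2),
    integral_prod_mul (fun x => π ^ 2 / (4 * d ^ 2) * ‖h x‖ ^ 2) (fun y => cos (π * y / d)),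
    integral_sin_sq_quarter_period hd, integral_cos_half_period hd]
  ring

/-- The restriction of the shifted waveguide quadratic form to product functions
`v(x,y) = h(x)·sin(πy/(2d))` equals `(d/2)` times the quadratic form of the
one-dimensional Schrödinger operator `−d²/dx² − 2V̂` on `L²(ℝ)`. -/
theorem stmt_7 (d : ℝ) (hd : 0 < d) (V : ℝ × ℝ → ℝ)
    (hVmeas : Measurable V) (hVpos : ∀ p, 0 ≤ V p)
    (hVloc : ∀ B : Set (ℝ × ℝ), Bornology.IsBounded B → IntegrableOn V (B ∩ Strip d))
    (h : ℝ → ℂ) (hh : ContDiff ℝ 1 h)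
    (hh2 : Integrable (fun x => ‖h x‖ ^ 2))
    (hh'2 : Integrable (fun x => ‖deriv h x‖ ^ 2))
    (hVh : Integrable (fun x => Vhat d V x * ‖h x‖ ^ 2))
    (v : ℝ × ℝ → ℂ)
    (hv : v = fun p => h p.1 * (Real.sin (π * p.2 / (2 * d)) : ℂ)) :
    (∫ p in Strip d,
        ((‖fderiv ℝ v p (1, 0)‖ ^ 2 + ‖fderiv ℝ v p (0, 1)‖ ^ 2) -
          (π ^ 2 / (4 * d ^ 2)) * ‖v p‖ ^ 2)) -
      2 * ∫ p in Strip d, V p * ‖v p‖ ^ 2 =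
    (d / 2) * ((∫ x : ℝ, ‖deriv h x‖ ^ 2) - 2 * ∫ x : ℝ, Vhat d V x * ‖h x‖ ^ 2) := by
  subst hv
  rw [integral_strip_shifted_energy hd (hh.differentiable one_ne_zero) hh2 hh'2,
    integral_strip_potential hd hVmeas hVpos hVloc hh.continuous hVh]
  ring
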